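/- arXiv:1812.06047 — 3 statements merged into one kernel-verified Lean document; each statement's English description precedes it below -/
import Mathlib

section
/- Suppose a normal mode transformation exists, i.e. there are a 2N×2N complex matrix T and positive real numbers μ₁, …, μ_N with Tᴴ R T = Σ, T = Γ T̄ Γ, and T⁻¹ D T = diag(μ₁, …, μ_N, −μ₁, …, −μ_N). Then Ω is positive definite. -/
/-!
Conjugating `Ω = R (R⁻¹ Ω)` by `T` gives `Tᴴ Ω T = (Tᴴ R T)(T⁻¹ D T) = Σ · diag(μ, -μ) = diag(μ, μ)`,
which is positive definite; `T` is invertible because `Tᴴ R T = Σ` is, so `Ω` is positive definite.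
-/

open Matrix ComplexOrder

namespace Matrix

variable {n m α : Type*} [Fintype n] [DecidableEq n] [Fintype m] [DecidableEq m]

theorem isUnit_det_of_conjTranspose_mul_mul_eq [CommRing α] [StarRing α]
    {T R S : Matrix n n α} (h : Tᴴ * R * T = S) (hS : IsUnit S.det) :
    IsUnit R.det ∧ IsUnit T.det := by
  rw [← h, det_mul, det_mul] at hS
  obtain ⟨hTR, hT⟩ := IsUnit.mul_iff.1 hS
  exact ⟨(IsUnit.mul_iff.1 hTR).2, hT⟩

theorem conjTranspose_mul_mul_eq_mul_of_conj_inv_mul [CommRing α] [StarRing α]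
    {T R Ω S Λ : Matrix n n α} (hRT : Tᴴ * R * T = S) (hR : IsUnit R.det) (hT : IsUnit T.det)
    (hΛ : T⁻¹ * (R⁻¹ * Ω) * T = Λ) :
    Tᴴ * Ω * T = S * Λ := by
  rw [← hRT, ← hΛ]
  simp only [Matrix.mul_assoc, mul_nonsing_inv_cancel_left _ _ hT,
    mul_nonsing_inv_cancel_left _ _ hR]

theorem isUnit_det_fromBlocks_one_zero_zero_neg_one [CommRing α] :
    IsUnit (fromBlocks 1 0 0 (-1) : Matrix (m ⊕ m) (m ⊕ m) α).det := by
  simpa [det_fromBlocks_zero₂₁, det_neg] using isUnit_neg_one.pow _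

theorem fromBlocks_one_zero_zero_neg_one_mul_diagonal [Ring α] (d : m → α) :
    fromBlocks 1 0 0 (-1) * diagonal (Sum.elim d fun i => -d i) = diagonal (Sum.elim d d) := by
  rw [← fromBlocks_diagonal, ← fromBlocks_diagonal, fromBlocks_multiply]
  simp [diagonal_neg]

end Matrix

theorem stmt_12_general {N : ℕ}
    (R Ω : Matrix (Fin N ⊕ Fin N) (Fin N ⊕ Fin N) ℂ)
    (Sig : Matrix (Fin N ⊕ Fin N) (Fin N ⊕ Fin N) ℂ)
    (hSig : Sig = Matrix.fromBlocks 1 0 0 (-1))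
    (D : Matrix (Fin N ⊕ Fin N) (Fin N ⊕ Fin N) ℂ) (hD : D = R⁻¹ * Ω)
    (T : Matrix (Fin N ⊕ Fin N) (Fin N ⊕ Fin N) ℂ) (μ : Fin N → ℝ)
    (hμpos : ∀ i, 0 < μ i)
    (hT1 : Tᴴ * R * T = Sig)
    (hT3 : T⁻¹ * D * T
      = Matrix.diagonal (Sum.elim (fun i => (μ i : ℂ)) fun i => -(μ i : ℂ))) :
    Ω.PosDef := by
  subst hSig hD
  obtain ⟨hR, hT⟩ :=
    isUnit_det_of_conjTranspose_mul_mul_eq hT1 isUnit_det_fromBlocks_one_zero_zero_neg_one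
  have hTΩT := conjTranspose_mul_mul_eq_mul_of_conj_inv_mul hT1 hR hT hT3
  rw [fromBlocks_one_zero_zero_neg_one_mul_diagonal] at hTΩT
  rw [← ((isUnit_iff_isUnit_det T).2 hT).posDef_star_left_conjugate_iff, star_eq_conjTranspose,
    hTΩT, posDef_diagonal_iff]
  rintro (i | i) <;> simpa using hμpos i

/-- if a normal mode transformation exists then `Ω` is positive definite. -/
theorem stmt_12 {N : ℕ} (hN : 0 < N)
    (R Ω : Matrix (Fin N ⊕ Fin N) (Fin N ⊕ Fin N) ℂ)
    (hR : R.IsHermitian) (hΩ : Ω.IsHermitian)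
    (Γ Sig : Matrix (Fin N ⊕ Fin N) (Fin N ⊕ Fin N) ℂ)
    (hΓ : Γ = Matrix.fromBlocks 0 1 1 0)
    (hSig : Sig = Matrix.fromBlocks 1 0 0 (-1))
    (hRconj : Γ * R.map (starRingEnd ℂ) * Γ = -R)
    (hΩconj : Γ * Ω.map (starRingEnd ℂ) * Γ = Ω)
    (hRunit : IsUnit R.det)
    (D : Matrix (Fin N ⊕ Fin N) (Fin N ⊕ Fin N) ℂ) (hD : D = R⁻¹ * Ω)
    (T : Matrix (Fin N ⊕ Fin N) (Fin N ⊕ Fin N) ℂ) (μ : Fin N → ℝ)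
    (hμpos : ∀ i, 0 < μ i)
    (hT1 : Tᴴ * R * T = Sig)
    (hT2 : T = Γ * T.map (starRingEnd ℂ) * Γ)
    (hT3 : T⁻¹ * D * T
      = Matrix.diagonal (Sum.elim (fun i => (μ i : ℂ)) fun i => -(μ i : ℂ))) :
    Ω.PosDef :=
  stmt_12_general R Ω Sig hSig D hD T μ hμpos hT1 hT3
end

section
/- A normal mode transformation exists if and only if Ω is positive definite. That is, Ω is positive definite if and only if there are a 2N×2N complex matrix T and positive real numbers μ₁, …, μ_N with Tᴴ R T = Σ, T = Γ T̄ Γ, and T⁻¹ D T = diag(μ₁, …, μ_N, −μ₁, …, −μ_N). -/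
/-!
Write `conjSwap A = Γ Ā Γ`; it is multiplicative, and the hypotheses say `conjSwap R = -R` and
`conjSwap Ω = Ω`.

If `Ω > 0`, its square root `W` is again fixed by `conjSwap` (the positive matrix `conjSwap W`
squares to `Ω`), so `M = W R⁻¹ W` is Hermitian, invertible and satisfies `conjSwap M = -M`. Since
`conjSwap M` has the conjugate characteristic polynomial, the real spectrum of `M` is symmetric
about `0`, hence `M` has exactly `N` positive eigenvalues `μ`. If the columns of `P` are
orthonormal eigenvectors for them, the columns of `Γ P̄` are orthonormal eigenvectors for `-μ`, so
`U = [P | Γ P̄]` is a `conjSwap`-invariant unitary with `M U = U diag(μ, -μ)`, and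
`T = W⁻¹ U diag(√μ, √μ)` is a normal mode transformation.

Conversely, `Tᴴ Ω T = (Tᴴ R T)(T⁻¹ D T) = Σ diag(μ, -μ) = diag(μ, μ)`, so `Ω` is congruent to a
positive diagonal matrix.
-/

open Matrix ComplexOrder Polynomial

namespace Matrix

variable {n : Type*} [Fintype n] [DecidableEq n]

lemma eq_zero_of_diagonal_mul_eq_mul_diagonal {k l R : Type*} [CommRing R] [IsDomain R]
    [Fintype k] [Fintype l] [DecidableEq k] [DecidableEq l] {X : Matrix k l R} {a : k → R}
    {b : l → R} (hab : ∀ i j, a i ≠ b j) (h : diagonal a * X = X * diagonal b) : X = 0 := by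
  ext i j
  have hij := congrFun (congrFun h i) j
  rw [diagonal_mul, mul_diagonal, mul_comm, ← sub_eq_zero, ← mul_sub] at hij
  exact (mul_eq_zero.mp hij).resolve_right (sub_ne_zero.mpr (hab i j))

namespace IsHermitian

variable {𝕜 : Type*} [RCLike 𝕜] {A : Matrix n n 𝕜}

lemma roots_charpoly_neg (hA : A.IsHermitian) :
    (-A).charpoly.roots = Finset.univ.val.map fun i => -(hA.eigenvalues i : 𝕜) := by
  conv_lhs => rw [hA.spectral_theorem, Unitary.conjStarAlgAut_apply, ← neg_mul, ← mul_neg,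
    charpoly_mul_comm, ← mul_assoc]
  rw [diagonal_neg, Unitary.star_mul_self_of_mem hA.eigenvectorUnitary.2, one_mul,
    charpoly_diagonal,
    roots_prod _ _ (Finset.prod_ne_zero_iff.mpr fun i _ => X_sub_C_ne_zero _)]
  simp

lemma charpoly_map_conj (hA : A.IsHermitian) : A.charpoly.map (starRingEnd 𝕜) = A.charpoly := by
  simp [hA.charpoly_eq, Polynomial.map_prod]

lemma eigenvalues_ne_zero (hA : A.IsHermitian) (hdet : A.det ≠ 0) (i : n) :
    hA.eigenvalues i ≠ 0 := by
  rw [hA.det_eq_prod_eigenvalues, Finset.prod_ne_zero_iff] at hdet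
  exact_mod_cast hdet i (Finset.mem_univ i)

lemma two_mul_card_pos_eigenvalues (hA : A.IsHermitian) (hdet : A.det ≠ 0)
    (h : (-A).charpoly = A.charpoly) :
    2 * Fintype.card {i // 0 < hA.eigenvalues i} = Fintype.card n := by
  have hsymm : Finset.univ.val.map (-hA.eigenvalues) = Finset.univ.val.map hA.eigenvalues := by
    apply Multiset.map_injective (RCLike.ofReal_injective (K := 𝕜))
    have := congrArg roots h
    rw [hA.roots_charpoly_neg, hA.roots_charpoly_eq_eigenvalues] at this
    simpa [Multiset.map_map, Function.comp_def] using this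
  have hneg : Fintype.card {i // hA.eigenvalues i < 0} =
      Fintype.card {i // 0 < hA.eigenvalues i} := by
    simpa [Multiset.countP_map, Fintype.card_subtype, Finset.card_def, Finset.filter_val]
      using congrArg (Multiset.countP (0 < ·)) hsymm
  have hcompl : Fintype.card {i // ¬0 < hA.eigenvalues i} =
      Fintype.card {i // hA.eigenvalues i < 0} :=
    Fintype.card_congr <| Equiv.subtypeEquivRight fun i =>
      not_lt.trans (hA.eigenvalues_ne_zero hdet i).le_iff_lt
  have := Fintype.card_subtype_compl fun i => 0 < hA.eigenvalues i
  have := Fintype.card_subtype_le fun i => 0 < hA.eigenvalues i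
  omega

lemma exists_isometry_mul_eq_mul_diagonal (hA : A.IsHermitian) {k : Type*} [Fintype k]
    [DecidableEq k] (f : k ↪ n) :
    ∃ P : Matrix n k 𝕜, Pᴴ * P = 1 ∧
      A * P = P * diagonal fun j => (hA.eigenvalues (f j) : 𝕜) := by
  set E : Matrix n n 𝕜 := ↑hA.eigenvectorUnitary
  have hE : star E * E = 1 := Unitary.star_mul_self_of_mem hA.eigenvectorUnitary.2
  have hAE : A * E = E * diagonal (RCLike.ofReal ∘ hA.eigenvalues) := by
    conv_lhs => rw [hA.spectral_theorem, Unitary.conjStarAlgAut_apply]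
    rw [mul_assoc, hE, mul_one]
  refine ⟨E.submatrix id f, ?_, ?_⟩
  · rw [conjTranspose_submatrix, ← submatrix_mul _ _ _ _ _ Function.bijective_id,
      ← star_eq_conjTranspose, hE, submatrix_one _ f.injective]
  · ext i j
    have hij := congrFun (congrFun hAE i) (f j)
    rw [mul_diagonal] at hij
    rw [mul_diagonal]
    simpa [mul_apply] using hij

end IsHermitian

section conjSwap

variable {m : Type*} [Fintype m] [DecidableEq m]

def swapBlocks (m : Type*) [DecidableEq m] : Matrix (m ⊕ m) (m ⊕ m) ℂ := fromBlocks 0 1 1 0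

lemma swapBlocks_mul_self : swapBlocks m * swapBlocks m = 1 := by
  simp [swapBlocks, fromBlocks_multiply, fromBlocks_one]

omit [Fintype m] in
lemma conjTranspose_swapBlocks : (swapBlocks m)ᴴ = swapBlocks m := by
  simp [swapBlocks, fromBlocks_conjTranspose]

omit [Fintype m] in
lemma map_conj_swapBlocks : (swapBlocks m).map (starRingEnd ℂ) = swapBlocks m := by
  simp [swapBlocks, fromBlocks_map]

def conjSwap (A : Matrix (m ⊕ m) (m ⊕ m) ℂ) : Matrix (m ⊕ m) (m ⊕ m) ℂ :=
  swapBlocks m * A.map (starRingEnd ℂ) * swapBlocks m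

lemma conjSwap_mul (A B : Matrix (m ⊕ m) (m ⊕ m) ℂ) :
    conjSwap (A * B) = conjSwap A * conjSwap B := by
  simp only [conjSwap, Matrix.map_mul, Matrix.mul_assoc]
  rw [← Matrix.mul_assoc (swapBlocks m) (swapBlocks m), swapBlocks_mul_self, Matrix.one_mul]

lemma conjSwap_mul_swapBlocks_mul_map {k : Type*} (A : Matrix (m ⊕ m) (m ⊕ m) ℂ)
    (B : Matrix (m ⊕ m) k ℂ) :
    conjSwap A * (swapBlocks m * B.map (starRingEnd ℂ)) =
      swapBlocks m * (A * B).map (starRingEnd ℂ) := by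
  simp only [conjSwap, Matrix.map_mul, Matrix.mul_assoc]
  rw [← Matrix.mul_assoc (swapBlocks m) (swapBlocks m), swapBlocks_mul_self, Matrix.one_mul]

lemma conjSwap_one : conjSwap (1 : Matrix (m ⊕ m) (m ⊕ m) ℂ) = 1 := by
  simp [conjSwap, swapBlocks_mul_self]

lemma conjSwap_nonsing_inv {A : Matrix (m ⊕ m) (m ⊕ m) ℂ} (hA : IsUnit A.det) :
    conjSwap A⁻¹ = (conjSwap A)⁻¹ :=
  (inv_eq_right_inv (by rw [← conjSwap_mul, mul_nonsing_inv _ hA, conjSwap_one])).symm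

lemma conjSwap_fromBlocks (A B C D : Matrix m m ℂ) :
    conjSwap (fromBlocks A B C D) = fromBlocks (D.map (starRingEnd ℂ)) (C.map (starRingEnd ℂ))
      (B.map (starRingEnd ℂ)) (A.map (starRingEnd ℂ)) := by
  simp [conjSwap, swapBlocks, fromBlocks_map, fromBlocks_multiply]

lemma conjSwap_fromCols (P Q : Matrix (m ⊕ m) m ℂ) :
    conjSwap (fromCols P Q) = fromCols (swapBlocks m * Q.map (starRingEnd ℂ))
      (swapBlocks m * P.map (starRingEnd ℂ)) := by
  simp [conjSwap, swapBlocks, fromCols_map, mul_fromCols, fromCols_mul_fromBlocks]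

lemma charpoly_conjSwap (A : Matrix (m ⊕ m) (m ⊕ m) ℂ) :
    (conjSwap A).charpoly = A.charpoly.map (starRingEnd ℂ) := by
  rw [conjSwap, charpoly_mul_comm, ← mul_assoc, swapBlocks_mul_self, one_mul, charpoly_map]

lemma PosSemidef.conjSwap {A : Matrix (m ⊕ m) (m ⊕ m) ℂ} (hA : A.PosSemidef) :
    (conjSwap A).PosSemidef := by
  have hmap : A.map (starRingEnd ℂ) = Aᵀ := by
    ext i j
    simpa using congrFun (congrFun hA.1 j) i
  rw [Matrix.conjSwap, hmap]
  nth_rw 1 [← conjTranspose_swapBlocks]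
  exact hA.transpose.conjTranspose_mul_mul_same _

open scoped MatrixOrder in
lemma PosSemidef.exists_sqrt_conjSwap_eq_self {Ω : Matrix (m ⊕ m) (m ⊕ m) ℂ}
    (hΩ : Ω.PosSemidef) (hK : Matrix.conjSwap Ω = Ω) :
    ∃ W : Matrix (m ⊕ m) (m ⊕ m) ℂ, W.IsHermitian ∧ W * W = Ω ∧ Matrix.conjSwap W = W := by
  have hW := (CFC.sqrt_nonneg Ω).posSemidef
  have hWW : CFC.sqrt Ω * CFC.sqrt Ω = Ω := CFC.sqrt_mul_sqrt_self Ω hΩ.nonneg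
  refine ⟨CFC.sqrt Ω, hW.1, hWW, (CFC.sqrt_unique ?_ hW.conjSwap.nonneg).symm⟩
  rw [← conjSwap_mul, hWW, hK]

def diagonalPM (μ : m → ℝ) : Matrix (m ⊕ m) (m ⊕ m) ℂ :=
  diagonal (Sum.elim (fun i => (μ i : ℂ)) fun i => -(μ i : ℂ))

omit [Fintype m] in
lemma diagonalPM_eq_fromBlocks (μ : m → ℝ) :
    diagonalPM μ =
      fromBlocks (diagonal fun i => (μ i : ℂ)) 0 0 (-diagonal fun i => (μ i : ℂ)) := by
  rw [diagonalPM, ← fromBlocks_diagonal, diagonal_neg]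

lemma fromBlocks_one_neg_one_mul_diagonalPM (μ : m → ℝ) :
    fromBlocks 1 0 0 (-1) * diagonalPM μ =
      diagonal (Sum.elim (fun i => (μ i : ℂ)) fun i => (μ i : ℂ)) := by
  rw [diagonalPM_eq_fromBlocks, fromBlocks_multiply, ← fromBlocks_diagonal]
  simp

lemma isUnit_diagonalPM {μ : m → ℝ} (hμ : ∀ i, μ i ≠ 0) : IsUnit (diagonalPM μ) := by
  rw [diagonalPM, isUnit_diagonal, Pi.isUnit_iff]
  rintro (i | i) <;> simp [hμ i]

noncomputable def diagonalSqrt (μ : m → ℝ) : Matrix (m ⊕ m) (m ⊕ m) ℂ :=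
  diagonal (Sum.elim (fun i => (√(μ i) : ℂ)) fun i => (√(μ i) : ℂ))

lemma conjSwap_diagonalSqrt (μ : m → ℝ) : conjSwap (diagonalSqrt μ) = diagonalSqrt μ := by
  simp only [diagonalSqrt, ← fromBlocks_diagonal, conjSwap_fromBlocks]
  simp [diagonal_map]

omit [Fintype m] in
lemma conjTranspose_diagonalSqrt (μ : m → ℝ) : (diagonalSqrt μ)ᴴ = diagonalSqrt μ := by
  simp [diagonalSqrt, diagonal_conjTranspose]

lemma diagonalSqrt_mul_self {μ : m → ℝ} (hμ : ∀ i, 0 ≤ μ i) :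
    diagonalSqrt μ * diagonalSqrt μ = fromBlocks 1 0 0 (-1) * diagonalPM μ := by
  rw [fromBlocks_one_neg_one_mul_diagonalPM, diagonalSqrt, diagonal_mul_diagonal]
  congr 1
  ext (i | i) <;> simp [← Complex.ofReal_mul, Real.mul_self_sqrt (hμ i)]

lemma isUnit_det_diagonalSqrt {μ : m → ℝ} (hμ : ∀ i, 0 < μ i) : IsUnit (diagonalSqrt μ).det :=
  (isUnit_iff_isUnit_det _).1 <| isUnit_diagonal.2 <| Pi.isUnit_iff.2 <| by
    rintro (i | i) <;> simp [(Real.sqrt_pos.2 (hμ i)).ne']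

def fromColsConjSwap (P : Matrix (m ⊕ m) m ℂ) : Matrix (m ⊕ m) (m ⊕ m) ℂ :=
  fromCols P (swapBlocks m * P.map (starRingEnd ℂ))

lemma conjSwap_fromColsConjSwap (P : Matrix (m ⊕ m) m ℂ) :
    conjSwap (fromColsConjSwap P) = fromColsConjSwap P := by
  rw [fromColsConjSwap, conjSwap_fromCols]
  simp [Matrix.map_mul, map_conj_swapBlocks, ← Matrix.mul_assoc, swapBlocks_mul_self,
    Function.comp_def]

section AntiInvariant

variable {M : Matrix (m ⊕ m) (m ⊕ m) ℂ} {P : Matrix (m ⊕ m) m ℂ} {μ : m → ℝ}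

lemma mul_swapBlocks_mul_map_conj (hK : conjSwap M = -M)
    (hMP : M * P = P * diagonal fun j => (μ j : ℂ)) :
    M * (swapBlocks m * P.map (starRingEnd ℂ)) =
      swapBlocks m * P.map (starRingEnd ℂ) * -diagonal fun j => (μ j : ℂ) :=
  calc M * (swapBlocks m * P.map (starRingEnd ℂ))
      = -(conjSwap M * (swapBlocks m * P.map (starRingEnd ℂ))) := by
        rw [hK, Matrix.neg_mul, neg_neg]
    _ = _ := by
        rw [conjSwap_mul_swapBlocks_mul_map, hMP, Matrix.map_mul, diagonal_map (map_zero _),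
          Matrix.mul_neg, Matrix.mul_assoc]
        simp

lemma mul_fromColsConjSwap (hK : conjSwap M = -M)
    (hMP : M * P = P * diagonal fun j => (μ j : ℂ)) :
    M * fromColsConjSwap P = fromColsConjSwap P * diagonalPM μ := by
  rw [fromColsConjSwap, mul_fromCols, hMP, mul_swapBlocks_mul_map_conj hK hMP,
    diagonalPM_eq_fromBlocks, fromCols_mul_fromBlocks]
  simp

lemma conjTranspose_fromColsConjSwap_mul_self (hM : M.IsHermitian) (hK : conjSwap M = -M)
    (hμ : ∀ i, 0 < μ i) (hPP : Pᴴ * P = 1) (hMP : M * P = P * diagonal fun j => (μ j : ℂ)) :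
    (fromColsConjSwap P)ᴴ * fromColsConjSwap P = 1 := by
  set Dμ : Matrix m m ℂ := diagonal fun j => (μ j : ℂ)
  set Q := swapBlocks m * P.map (starRingEnd ℂ)
  have hDμ : Dμᴴ = Dμ := by simp [Dμ, diagonal_conjTranspose]
  have hQQ : Qᴴ * Q = 1 := by
    rw [conjTranspose_mul, conjTranspose_swapBlocks, Matrix.mul_assoc,
      ← Matrix.mul_assoc (swapBlocks m), swapBlocks_mul_self, Matrix.one_mul,
      ← conjTranspose_map (starRingEnd ℂ) fun _ => rfl, ← Matrix.map_mul, hPP]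
    simp
  -- eigenvectors of the Hermitian `M` for the eigenvalues `μ i` and `-μ j` are orthogonal
  have hPQ : Pᴴ * Q = 0 := by
    refine eq_zero_of_diagonal_mul_eq_mul_diagonal (a := fun j => (μ j : ℂ))
      (b := fun j => -(μ j : ℂ)) (fun i j => ?_) ?_
    · exact_mod_cast ((neg_lt_zero.mpr (hμ j)).trans (hμ i)).ne'
    · calc Dμ * (Pᴴ * Q) = (M * P)ᴴ * Q := by
            rw [hMP, conjTranspose_mul, hDμ, Matrix.mul_assoc]
        _ = Pᴴ * Q * diagonal fun j => -(μ j : ℂ) := by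
          rw [conjTranspose_mul, hM.eq, Matrix.mul_assoc, mul_swapBlocks_mul_map_conj hK hMP,
            ← Matrix.mul_assoc, diagonal_neg]
  have hQP : Qᴴ * P = 0 := by simpa using congrArg conjTranspose hPQ
  rw [fromColsConjSwap, conjTranspose_fromCols_eq_fromRows_conjTranspose, fromRows_mul_fromCols,
    hPP, hQQ, hPQ, hQP, fromBlocks_one]

lemma IsHermitian.card_pos_eigenvalues_of_conjSwap_eq_neg (hM : M.IsHermitian)
    (hdet : M.det ≠ 0) (hK : conjSwap M = -M) :
    Fintype.card {i // 0 < hM.eigenvalues i} = Fintype.card m := by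
  have := hM.two_mul_card_pos_eigenvalues hdet
    (by rw [← hK, charpoly_conjSwap, hM.charpoly_map_conj])
  rw [Fintype.card_sum] at this
  omega

theorem IsHermitian.exists_unitary_of_conjSwap_eq_neg (hM : M.IsHermitian) (hdet : M.det ≠ 0)
    (hK : conjSwap M = -M) :
    ∃ (U : Matrix (m ⊕ m) (m ⊕ m) ℂ) (μ : m → ℝ),
      (∀ i, 0 < μ i) ∧ Uᴴ * U = 1 ∧ conjSwap U = U ∧ M * U = U * diagonalPM μ := by
  set e : m ≃ {i // 0 < hM.eigenvalues i} :=
    (Fintype.equivOfCardEq (hM.card_pos_eigenvalues_of_conjSwap_eq_neg hdet hK)).symm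
  set μ : m → ℝ := fun j => hM.eigenvalues (e j)
  have hμ : ∀ j, 0 < μ j := fun j => (e j).2
  obtain ⟨P, hPP, hMP⟩ :
      ∃ P : Matrix (m ⊕ m) m ℂ, Pᴴ * P = 1 ∧ M * P = P * diagonal fun j => (μ j : ℂ) :=
    hM.exists_isometry_mul_eq_mul_diagonal (e.toEmbedding.trans (Function.Embedding.subtype _))
  exact ⟨fromColsConjSwap P, μ, hμ, conjTranspose_fromColsConjSwap_mul_self hM hK hμ hPP hMP,
    conjSwap_fromColsConjSwap P, mul_fromColsConjSwap hK hMP⟩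

end AntiInvariant

end conjSwap

end Matrix

section NormalMode

variable {m : Type*} [Fintype m] [DecidableEq m]

def IsNormalModeTransformation (R Ω T : Matrix (m ⊕ m) (m ⊕ m) ℂ) (μ : m → ℝ) : Prop :=
  (∀ i, 0 < μ i) ∧ Tᴴ * R * T = fromBlocks 1 0 0 (-1) ∧ T = conjSwap T ∧
    T⁻¹ * (R⁻¹ * Ω) * T = diagonalPM μ

theorem IsNormalModeTransformation.posDef {R Ω T : Matrix (m ⊕ m) (m ⊕ m) ℂ} {μ : m → ℝ}
    (h : IsNormalModeTransformation R Ω T μ) : Ω.PosDef := by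
  obtain ⟨hμ, hTRT, -, hTDT⟩ := h
  have hdet : IsUnit (Tᴴ * R * T).det := by
    simp [hTRT, det_fromBlocks_zero₂₁, det_neg]
  rw [det_mul, det_mul] at hdet
  have hT : IsUnit T.det := isUnit_of_mul_isUnit_right hdet
  have hR : IsUnit R.det := isUnit_of_mul_isUnit_right (isUnit_of_mul_isUnit_left hdet)
  have hΩT : Ω * T = R * T * diagonalPM μ := by
    simp only [← hTDT, Matrix.mul_assoc, mul_nonsing_inv_cancel_left _ _ hT,
      mul_nonsing_inv_cancel_left _ _ hR]
  have hTΩT : Tᴴ * Ω * T = diagonal (Sum.elim (fun i => (μ i : ℂ)) fun i => (μ i : ℂ)) := by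
    rw [Matrix.mul_assoc, hΩT, ← Matrix.mul_assoc, ← Matrix.mul_assoc, hTRT,
      fromBlocks_one_neg_one_mul_diagonalPM]
  refine (IsUnit.posDef_star_left_conjugate_iff ((isUnit_iff_isUnit_det T).2 hT)).1 ?_
  rw [star_eq_conjTranspose, hTΩT]
  exact PosDef.diagonal fun i => by cases i <;> simpa using hμ _

theorem isNormalModeTransformation_inv_mul_mul_diagonalSqrt
    {R Ω W U : Matrix (m ⊕ m) (m ⊕ m) ℂ} {μ : m → ℝ} (hRdet : IsUnit R.det)
    (hWH : W.IsHermitian) (hWdet : IsUnit W.det) (hWW : W * W = Ω) (hWK : conjSwap W = W)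
    (hμ : ∀ i, 0 < μ i) (hUU : Uᴴ * U = 1) (hUK : conjSwap U = U)
    (hMU : W * R⁻¹ * W * U = U * diagonalPM μ) :
    IsNormalModeTransformation R Ω (W⁻¹ * U * diagonalSqrt μ) μ := by
  set T := W⁻¹ * U * diagonalSqrt μ
  have hT : IsUnit T.det := by
    rw [det_mul, det_mul]
    exact ((isUnit_nonsing_inv_det W hWdet).mul (isUnit_det_of_left_inverse hUU)).mul
      (isUnit_det_diagonalSqrt hμ)
  have hTD : R⁻¹ * Ω * T = T * diagonalPM μ :=
    calc R⁻¹ * Ω * T = W⁻¹ * (W * R⁻¹ * W * U) * diagonalSqrt μ := by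
          simp only [T, ← hWW, Matrix.mul_assoc, mul_nonsing_inv_cancel_left _ _ hWdet,
            nonsing_inv_mul_cancel_left _ _ hWdet]
      _ = W⁻¹ * U * (diagonalPM μ * diagonalSqrt μ) := by rw [hMU]; simp only [Matrix.mul_assoc]
      _ = W⁻¹ * U * diagonalSqrt μ * diagonalPM μ := by
          rw [diagonalPM, diagonalSqrt, (commute_diagonal _ _).eq, ← Matrix.mul_assoc]
  have hTΩT : Tᴴ * Ω * T = diagonalSqrt μ * diagonalSqrt μ := by
    rw [conjTranspose_mul, conjTranspose_mul, conjTranspose_diagonalSqrt,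
      conjTranspose_nonsing_inv, hWH.eq, ← hWW]
    simp only [T, Matrix.mul_assoc, mul_nonsing_inv_cancel_left _ _ hWdet,
      nonsing_inv_mul_cancel_left _ _ hWdet]
    rw [← Matrix.mul_assoc Uᴴ, hUU, Matrix.one_mul]
  refine ⟨hμ, ?_, ?_, ?_⟩
  · -- `Tᴴ R T · diag(μ, -μ) = Tᴴ R (R⁻¹ Ω) T = Tᴴ Ω T = diag(√μ, √μ)² = Σ · diag(μ, -μ)`
    refine (isUnit_diagonalPM fun i => (hμ i).ne').mul_left_inj.1 ?_
    rw [← diagonalSqrt_mul_self fun i => (hμ i).le, ← hTΩT, Matrix.mul_assoc _ T, ← hTD]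
    simp only [Matrix.mul_assoc, mul_nonsing_inv_cancel_left _ _ hRdet]
  · rw [conjSwap_mul, conjSwap_mul, conjSwap_nonsing_inv hWdet, hWK, hUK, conjSwap_diagonalSqrt]
  · rw [Matrix.mul_assoc, hTD, ← Matrix.mul_assoc, nonsing_inv_mul _ hT, Matrix.one_mul]

theorem exists_isNormalModeTransformation {R Ω : Matrix (m ⊕ m) (m ⊕ m) ℂ}
    (hR : R.IsHermitian) (hRdet : IsUnit R.det) (hRK : conjSwap R = -R)
    (hΩ : Ω.PosDef) (hΩK : conjSwap Ω = Ω) :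
    ∃ T μ, IsNormalModeTransformation R Ω T μ := by
  obtain ⟨W, hWH, hWW, hWK⟩ := hΩ.posSemidef.exists_sqrt_conjSwap_eq_self hΩK
  have hWdet : IsUnit W.det :=
    isUnit_of_mul_isUnit_left (by rw [← det_mul, hWW]; exact hΩ.det_pos.ne'.isUnit)
  have hRinvK : conjSwap R⁻¹ = -R⁻¹ := by
    rw [conjSwap_nonsing_inv hRdet, hRK]
    exact inv_eq_left_inv (by rw [neg_mul_neg, nonsing_inv_mul _ hRdet])
  have hMH : (W * R⁻¹ * W).IsHermitian := by
    simpa [hWH.eq] using isHermitian_conjTranspose_mul_mul W hR.inv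
  have hMdet : (W * R⁻¹ * W).det ≠ 0 := by
    simp only [det_mul]
    exact ((hWdet.mul (isUnit_nonsing_inv_det R hRdet)).mul hWdet).ne_zero
  have hMK : conjSwap (W * R⁻¹ * W) = -(W * R⁻¹ * W) := by
    simp only [conjSwap_mul, hWK, hRinvK, Matrix.mul_neg, Matrix.neg_mul]
  obtain ⟨U, μ, hμ, hUU, hUK, hMU⟩ := hMH.exists_unitary_of_conjSwap_eq_neg hMdet hMK
  exact ⟨_, μ, isNormalModeTransformation_inv_mul_mul_diagonalSqrt hRdet hWH hWdet hWW hWK hμ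
    hUU hUK hMU⟩

end NormalMode

theorem stmt_13_general {N : ℕ}
    (R Ω : Matrix (Fin N ⊕ Fin N) (Fin N ⊕ Fin N) ℂ)
    (hR : R.IsHermitian)
    (Γ Sig : Matrix (Fin N ⊕ Fin N) (Fin N ⊕ Fin N) ℂ)
    (hΓ : Γ = Matrix.fromBlocks 0 1 1 0)
    (hSig : Sig = Matrix.fromBlocks 1 0 0 (-1))
    (hRconj : Γ * R.map (starRingEnd ℂ) * Γ = -R)
    (hΩconj : Γ * Ω.map (starRingEnd ℂ) * Γ = Ω)
    (hRunit : IsUnit R.det)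
    (D : Matrix (Fin N ⊕ Fin N) (Fin N ⊕ Fin N) ℂ) (hD : D = R⁻¹ * Ω) :
    Ω.PosDef ↔
      ∃ (T : Matrix (Fin N ⊕ Fin N) (Fin N ⊕ Fin N) ℂ) (μ : Fin N → ℝ),
        (∀ i, 0 < μ i) ∧
        Tᴴ * R * T = Sig ∧
        T = Γ * T.map (starRingEnd ℂ) * Γ ∧
        T⁻¹ * D * T
          = Matrix.diagonal (Sum.elim (fun i => (μ i : ℂ)) fun i => -(μ i : ℂ)) := by
  subst hΓ hSig hD
  exact ⟨fun hΩ => exists_isNormalModeTransformation hR hRunit hRconj hΩ hΩconj,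
    fun ⟨_, _, h⟩ => IsNormalModeTransformation.posDef h⟩

/-- a normal mode transformation exists if and only if `Ω` is positive
definite. -/
theorem stmt_13 {N : ℕ} (hN : 0 < N)
    (R Ω : Matrix (Fin N ⊕ Fin N) (Fin N ⊕ Fin N) ℂ)
    (hR : R.IsHermitian) (hΩ : Ω.IsHermitian)
    (Γ Sig : Matrix (Fin N ⊕ Fin N) (Fin N ⊕ Fin N) ℂ)
    (hΓ : Γ = Matrix.fromBlocks 0 1 1 0)
    (hSig : Sig = Matrix.fromBlocks 1 0 0 (-1))
    (hRconj : Γ * R.map (starRingEnd ℂ) * Γ = -R)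
    (hΩconj : Γ * Ω.map (starRingEnd ℂ) * Γ = Ω)
    (hRunit : IsUnit R.det)
    (D : Matrix (Fin N ⊕ Fin N) (Fin N ⊕ Fin N) ℂ) (hD : D = R⁻¹ * Ω) :
    Ω.PosDef ↔
      ∃ (T : Matrix (Fin N ⊕ Fin N) (Fin N ⊕ Fin N) ℂ) (μ : Fin N → ℝ),
        (∀ i, 0 < μ i) ∧
        Tᴴ * R * T = Sig ∧
        T = Γ * T.map (starRingEnd ℂ) * Γ ∧
        T⁻¹ * D * T
          = Matrix.diagonal (Sum.elim (fun i => (μ i : ℂ)) fun i => -(μ i : ℂ)) :=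
  stmt_13_general R Ω hR Γ Sig hΓ hSig hRconj hΩconj hRunit D hD
end

section
/- Let v ∈ ℝ and let φ, ψ : ℝ × ℝ → ℂ be infinitely differentiable functions such that for every t: (a) both φ(t,·) and ψ(t,·) satisfy the wave equation (∂_t + v ∂_x)² φ = F̂²φ and (∂_t + v ∂_x)² ψ = F̂²ψ for 0 ≤ x ≤ L, where F̂ acts in the variable x and F̂² = F̂ ∘ F̂; and (b) the even-order x-derivatives of φ and ψ up to order 4M vanish at x = 0 and x = L. Define the inner product (φ, χ)(t) = i ∫₀ᴸ [ χ̄·(∂_t + v ∂_x)φ − φ·(∂_t + v ∂_x)χ̄ ] dx, where the bar denotes complex conjugation. Then for every t, (φ, ∂_tψ)(t) = i ∫₀ᴸ [ (∂_t ψ̄)(∂_t φ) + (F̂ ψ̄)(F̂ φ) − v² (∂_x φ)(∂_x ψ̄) ] dx. -/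
open Complex Finset MeasureTheory

local notation "conjC" => starRingEnd ℂ


/-- The Lorentz-violating differential operator acting on complex-valued functions:
`(F̂U)(x) = Σ_{i=1}^{M} c_i L⋆^(2i-2) U^(2i-1)(x)`. -/
noncomputable def FhatC (M : ℕ) (c : ℕ → ℝ) (Lstar : ℝ) (U : ℝ → ℂ) : ℝ → ℂ :=
  fun x => ∑ i ∈ Finset.range M,
    ((c (i + 1) * Lstar ^ (2 * i) : ℝ) : ℂ) * iteratedDeriv (2 * i + 1) U x

/-- The operator `∂_t + v ∂_x` acting on a function of two variables. -/
noncomputable def Dop (v : ℝ) (φ : ℝ → ℝ → ℂ) : ℝ → ℝ → ℂ :=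
  fun t x => deriv (fun s => φ s x) t + (v : ℂ) * deriv (fun y => φ t y) x

/-- partial derivative in the first variable -/
noncomputable def pD1 (F : ℝ × ℝ → ℂ) : ℝ × ℝ → ℂ := fun p => fderiv ℝ F p (1, 0)

/-- partial derivative in the second variable -/
noncomputable def pD2 (F : ℝ × ℝ → ℂ) : ℝ × ℝ → ℂ := fun p => fderiv ℝ F p (0, 1)

theorem pd1 {F : ℝ × ℝ → ℂ} (hF : ContDiff ℝ (⊤ : ℕ∞) F) (t x : ℝ) :
    HasDerivAt (fun s => F (s, x)) (pD1 F (t, x)) t := by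
  have h := (hF.differentiable (by simp) (t, x)).hasFDerivAt
  have hg : HasDerivAt (fun s : ℝ => (s, x)) ((1 : ℝ), (0 : ℝ)) t :=
    (hasDerivAt_id t).prodMk (hasDerivAt_const t x)
  exact h.comp_hasDerivAt t hg

theorem pd2 {F : ℝ × ℝ → ℂ} (hF : ContDiff ℝ (⊤ : ℕ∞) F) (t x : ℝ) :
    HasDerivAt (fun y => F (t, y)) (pD2 F (t, x)) x := by
  have h := (hF.differentiable (by simp) (t, x)).hasFDerivAt
  have hg : HasDerivAt (fun y : ℝ => (t, y)) ((0 : ℝ), (1 : ℝ)) x :=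
    (hasDerivAt_const x t).prodMk (hasDerivAt_id x)
  exact h.comp_hasDerivAt x hg

theorem cdD1 {F : ℝ × ℝ → ℂ} (hF : ContDiff ℝ (⊤ : ℕ∞) F) : ContDiff ℝ (⊤ : ℕ∞) (pD1 F) :=
  (hF.fderiv_right (by simp)).clm_apply contDiff_const

theorem cdD2 {F : ℝ × ℝ → ℂ} (hF : ContDiff ℝ (⊤ : ℕ∞) F) : ContDiff ℝ (⊤ : ℕ∞) (pD2 F) :=
  (hF.fderiv_right (by simp)).clm_apply contDiff_const

theorem symm2 {F : ℝ × ℝ → ℂ} (hF : ContDiff ℝ (⊤ : ℕ∞) F) (q : ℝ × ℝ) :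
    pD1 (pD2 F) q = pD2 (pD1 F) q := by
  have hd : DifferentiableAt ℝ (fderiv ℝ F) q :=
    ((hF.fderiv_right (m := (⊤ : ℕ∞)) (by simp)).differentiable (by simp)) q
  have h1 : pD1 (pD2 F) q = fderiv ℝ (fderiv ℝ F) q (1, 0) (0, 1) := by
    unfold pD1 pD2
    have := fderiv_clm_apply (c := fderiv ℝ F) (u := fun _ => ((0 : ℝ), (1 : ℝ))) hd
      (differentiableAt_const _)
    simp only [this]
    simp
  have h2 : pD2 (pD1 F) q = fderiv ℝ (fderiv ℝ F) q (0, 1) (1, 0) := by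
    unfold pD1 pD2
    have := fderiv_clm_apply (c := fderiv ℝ F) (u := fun _ => ((1 : ℝ), (0 : ℝ))) hd
      (differentiableAt_const _)
    simp only [this]
    simp
  rw [h1, h2]
  exact (hF.contDiffAt.isSymmSndFDerivAt (by norm_num; exact WithTop.coe_le_coe.mpr (le_top : (2 : ℕ∞) ≤ ⊤))).eq _ _

theorem hasDerivAt_conj {f : ℝ → ℂ} {f' : ℂ} {x : ℝ} (hf : HasDerivAt f f' x) :
    HasDerivAt (fun y => conjC (f y)) (conjC f') x := by
  have := hf.star
  simp only [starRingEnd_apply]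
  convert this using 1

theorem contDiff_conj {n : WithTop ℕ∞} {f : ℝ → ℂ} (hf : ContDiff ℝ n f) :
    ContDiff ℝ n (fun y => conjC (f y)) := by
  have : (fun y => conjC (f y)) = Complex.conjCLE ∘ f := by
    funext y; simp [Complex.conjCLE_apply]
  rw [this]; exact Complex.conjCLE.contDiff.comp hf

theorem deriv_conj' {f : ℝ → ℂ} (hf : Differentiable ℝ f) (x : ℝ) :
    deriv (fun y => conjC (f y)) x = conjC (deriv f x) :=
  (hasDerivAt_conj (hf x).hasDerivAt).deriv

theorem contDiff_iteratedDeriv' {f : ℝ → ℂ} (hf : ContDiff ℝ (⊤ : ℕ∞) f) (n : ℕ) :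
    ContDiff ℝ (⊤ : ℕ∞) (iteratedDeriv n f) := by
  rw [iteratedDeriv_eq_iterate]; exact hf.iterate_deriv n

theorem differentiable_iterated {f : ℝ → ℂ} (hf : ContDiff ℝ (⊤ : ℕ∞) f) (n : ℕ) :
    Differentiable ℝ (iteratedDeriv n f) :=
  (contDiff_iteratedDeriv' hf n).differentiable (by simp)

theorem hasDerivAt_iteratedDeriv {f : ℝ → ℂ} (hf : ContDiff ℝ (⊤ : ℕ∞) f) (n : ℕ) (x : ℝ) :
    HasDerivAt (iteratedDeriv n f) (iteratedDeriv (n + 1) f x) x := by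
  rw [iteratedDeriv_succ]
  exact (differentiable_iterated hf n x).hasDerivAt.congr_deriv rfl

theorem iteratedDeriv_conj {f : ℝ → ℂ} (hf : ContDiff ℝ (⊤ : ℕ∞) f) (n : ℕ) :
    iteratedDeriv n (fun y => conjC (f y)) = fun x => conjC (iteratedDeriv n f x) := by
  induction n with
  | zero => simp
  | succ n ih =>
    funext x
    rw [iteratedDeriv_succ, ih, iteratedDeriv_succ]
    exact deriv_conj' (differentiable_iterated hf n) x

theorem contDiff_FhatC {f : ℝ → ℂ} (hf : ContDiff ℝ (⊤ : ℕ∞) f) (M : ℕ) (c : ℕ → ℝ) (L : ℝ) :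
    ContDiff ℝ (⊤ : ℕ∞) (FhatC M c L f) := by
  unfold FhatC
  apply ContDiff.sum
  intro i _
  exact contDiff_const.mul (contDiff_iteratedDeriv' hf _)

theorem iteratedDeriv_FhatC {f : ℝ → ℂ} (hf : ContDiff ℝ (⊤ : ℕ∞) f) (M : ℕ) (c : ℕ → ℝ)
    (L : ℝ) (n : ℕ) :
    iteratedDeriv n (FhatC M c L f) = fun x => ∑ i ∈ Finset.range M,
      ((c (i + 1) * L ^ (2 * i) : ℝ) : ℂ) * iteratedDeriv (2 * i + 1 + n) f x := by
  induction n with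
  | zero => simp only [iteratedDeriv_zero, Nat.add_zero]; rfl
  | succ n ih =>
    rw [iteratedDeriv_succ, ih]
    funext x
    rw [deriv_fun_sum]
    · refine Finset.sum_congr rfl fun i _ => ?_
      rw [deriv_const_mul _ (differentiable_iterated hf _ x), ← iteratedDeriv_succ,
        Nat.add_assoc]
    · intro i _
      exact ((differentiable_iterated hf _ x).const_mul _)

theorem FhatC_conj {f : ℝ → ℂ} (hf : ContDiff ℝ (⊤ : ℕ∞) f) (M : ℕ) (c : ℕ → ℝ) (L : ℝ) :
    FhatC M c L (fun y => conjC (f y)) = fun x => conjC (FhatC M c L f x) := by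
  funext x
  unfold FhatC
  rw [map_sum]
  refine Finset.sum_congr rfl fun i _ => ?_
  rw [iteratedDeriv_conj hf, map_mul, Complex.conj_ofReal]

theorem telescope_hasDerivAt {u w : ℝ → ℂ} (hu : ContDiff ℝ (⊤ : ℕ∞) u)
    (hw : ContDiff ℝ (⊤ : ℕ∞) w) (n : ℕ) (x : ℝ) :
    HasDerivAt (fun y => ∑ k ∈ Finset.range (n + 1),
        (-1 : ℂ) ^ k * iteratedDeriv k u y * iteratedDeriv (n - k) w y)
      ((-1 : ℂ) ^ n * iteratedDeriv (n + 1) u x * w x + u x * iteratedDeriv (n + 1) w x) x := by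
  classical
  set g : ℕ → ℂ := fun k => (-1 : ℂ) ^ k * iteratedDeriv k u x * iteratedDeriv (n + 1 - k) w x
    with hg
  have key : ∀ k ∈ Finset.range (n + 1),
      HasDerivAt (fun y => (-1 : ℂ) ^ k * iteratedDeriv k u y * iteratedDeriv (n - k) w y)
        (g k - g (k + 1)) x := by
    intro k hk
    rw [Finset.mem_range] at hk
    have hk' : k ≤ n := Nat.lt_succ_iff.mp hk
    have h1 : HasDerivAt (fun y => (-1 : ℂ) ^ k * iteratedDeriv k u y)
        ((-1 : ℂ) ^ k * iteratedDeriv (k + 1) u x) x :=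
      (hasDerivAt_iteratedDeriv hu k x).const_mul _
    have h2 := hasDerivAt_iteratedDeriv hw (n - k) x
    have := h1.fun_mul h2
    refine this.congr_deriv ?_
    have e1 : n - k + 1 = n + 1 - k := by omega
    have e2 : n + 1 - (k + 1) = n - k := by omega
    rw [hg]
    simp only [e1, e2, pow_succ]
    ring
  have hsum := HasDerivAt.fun_sum key
  refine hsum.congr_deriv ?_
  rw [Finset.sum_sub_distrib]
  rw [show (∑ k ∈ Finset.range (n + 1), g k) - ∑ k ∈ Finset.range (n + 1), g (k + 1)
      = g 0 - g (n + 1) by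
    have := Finset.sum_range_sub' g (n + 1)
    rw [← this, Finset.sum_sub_distrib]]
  rw [hg]
  simp only [pow_zero, iteratedDeriv_zero, Nat.sub_zero, Nat.sub_self, pow_succ]
  ring

theorem integral_eq_integral_of_hasDerivAt {f g G : ℝ → ℂ} {L : ℝ}
    (hf : Continuous f) (hg : Continuous g)
    (hG : ∀ x ∈ Set.uIcc (0 : ℝ) L, HasDerivAt G (f x - g x) x)
    (h0 : G L = G 0) :
    ∫ x in (0 : ℝ)..L, f x = ∫ x in (0 : ℝ)..L, g x := by
  have hfg : IntervalIntegrable (fun x => f x - g x) volume 0 L :=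
    ((hf.sub hg).intervalIntegrable _ _)
  have h := intervalIntegral.integral_eq_sub_of_hasDerivAt hG hfg
  rw [intervalIntegral.integral_sub (hf.intervalIntegrable _ _) (hg.intervalIntegrable _ _),
    h0, sub_self, sub_eq_zero] at h
  exact h

/-- for solutions of the wave equation `(∂_t + v∂_x)²φ = F̂²φ` satisfying the
boundary conditions,
`(φ, ∂_tψ)(t) = i ∫₀ᴸ [(∂_tψ̄)(∂_tφ) + (F̂ψ̄)(F̂φ) - v²(∂_xφ)(∂_xψ̄)] dx`. -/
theorem stmt_17 (M : ℕ) (hM : 1 ≤ M) (c : ℕ → ℝ) (Lstar L : ℝ)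
    (hLstar : 0 < Lstar) (hL : 0 < L) (v : ℝ)
    (φ ψ : ℝ → ℝ → ℂ)
    (hφ : ContDiff ℝ (⊤ : ℕ∞) (Function.uncurry φ))
    (hψ : ContDiff ℝ (⊤ : ℕ∞) (Function.uncurry ψ))
    (hφwave : ∀ t x : ℝ, 0 ≤ x → x ≤ L →
      Dop v (Dop v φ) t x = FhatC M c Lstar (FhatC M c Lstar (φ t)) x)
    (hψwave : ∀ t x : ℝ, 0 ≤ x → x ≤ L →
      Dop v (Dop v ψ) t x = FhatC M c Lstar (FhatC M c Lstar (ψ t)) x)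
    (hφbc : ∀ t : ℝ, ∀ j : ℕ, 2 * j ≤ 4 * M →
      iteratedDeriv (2 * j) (φ t) 0 = 0 ∧ iteratedDeriv (2 * j) (φ t) L = 0)
    (hψbc : ∀ t : ℝ, ∀ j : ℕ, 2 * j ≤ 4 * M →
      iteratedDeriv (2 * j) (ψ t) 0 = 0 ∧ iteratedDeriv (2 * j) (ψ t) L = 0) :
    ∀ t : ℝ,
      Complex.I * ∫ x in (0:ℝ)..L,
        (starRingEnd ℂ (deriv (fun s => ψ s x) t)) * Dop v φ t x
          - φ t x *
            Dop v (fun r y => starRingEnd ℂ (deriv (fun s => ψ s y) r)) t x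
      = Complex.I * ∫ x in (0:ℝ)..L,
        (deriv (fun s => starRingEnd ℂ (ψ s x)) t) * (deriv (fun s => φ s x) t)
          + FhatC M c Lstar (fun y => starRingEnd ℂ (ψ t y)) x * FhatC M c Lstar (φ t) x
          - ((v : ℂ))^2 * deriv (fun y => φ t y) x
              * deriv (fun y => starRingEnd ℂ (ψ t y)) x := by
  intro t
  set Φ := Function.uncurry φ with hΦdef
  set Ψ := Function.uncurry ψ with hΨdef
  -- one-variable smoothness facts
  have hφi : ContDiff ℝ ((⊤ : ℕ∞) : WithTop ℕ∞) Φ := hφ.of_le (by simp)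
  have hψi : ContDiff ℝ ((⊤ : ℕ∞) : WithTop ℕ∞) Ψ := hψ.of_le (by simp)
  have hφt : ContDiff ℝ (⊤ : ℕ∞) (φ t) := hφi.comp (contDiff_const.prodMk contDiff_id)
  have hψt : ContDiff ℝ (⊤ : ℕ∞) (ψ t) := hψi.comp (contDiff_const.prodMk contDiff_id)
  have hb : ContDiff ℝ (⊤ : ℕ∞) (fun y => conjC (ψ t y)) := contDiff_conj hψt
  have hW : ContDiff ℝ (⊤ : ℕ∞) (FhatC M c Lstar (fun y => conjC (ψ t y))) :=
    contDiff_FhatC hb M c Lstar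
  have hFφ : ContDiff ℝ (⊤ : ℕ∞) (FhatC M c Lstar (φ t)) := contDiff_FhatC hφt M c Lstar
  -- pointwise description of the left integrand
  have hrw1 : (fun x : ℝ => (starRingEnd ℂ (deriv (fun s => ψ s x) t)) * Dop v φ t x
          - φ t x *
            Dop v (fun r y => starRingEnd ℂ (deriv (fun s => ψ s y) r)) t x)
      = fun x : ℝ => conjC (pD1 Ψ (t, x)) * (pD1 Φ (t, x) + (v : ℂ) * pD2 Φ (t, x))
          - φ t x * (conjC (pD1 (pD1 Ψ) (t, x)) + (v : ℂ) * conjC (pD2 (pD1 Ψ) (t, x))) := by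
    funext x
    simp only [Dop]
    have e1 : deriv (fun s => ψ s x) t = pD1 Ψ (t, x) := (pd1 hψ t x).deriv
    have e2 : deriv (fun s => φ s x) t = pD1 Φ (t, x) := (pd1 hφ t x).deriv
    have e3 : deriv (fun y => φ t y) x = pD2 Φ (t, x) := (pd2 hφ t x).deriv
    have e4 : (fun s => conjC (deriv (fun s' => ψ s' x) s)) = fun s => conjC (pD1 Ψ (s, x)) :=
      funext fun s => congrArg conjC (pd1 hψ s x).deriv
    have e5 : deriv (fun s => conjC (deriv (fun s' => ψ s' x) s)) t
        = conjC (pD1 (pD1 Ψ) (t, x)) := by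
      rw [e4]; exact (hasDerivAt_conj (pd1 (cdD1 hψ) t x)).deriv
    have e6 : (fun y => conjC (deriv (fun s => ψ s y) t)) = fun y => conjC (pD1 Ψ (t, y)) :=
      funext fun y => congrArg conjC (pd1 hψ t y).deriv
    have e7 : deriv (fun y => conjC (deriv (fun s => ψ s y) t)) x
        = conjC (pD2 (pD1 Ψ) (t, x)) := by
      rw [e6]; exact (hasDerivAt_conj (pd2 (cdD1 hψ) t x)).deriv
    rw [e1, e2, e3, e5, e7]
  -- pointwise description of the right integrand
  have hrw2 : (fun x : ℝ => (deriv (fun s => starRingEnd ℂ (ψ s x)) t)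
            * (deriv (fun s => φ s x) t)
          + FhatC M c Lstar (fun y => starRingEnd ℂ (ψ t y)) x * FhatC M c Lstar (φ t) x
          - ((v : ℂ))^2 * deriv (fun y => φ t y) x
              * deriv (fun y => starRingEnd ℂ (ψ t y)) x)
      = fun x : ℝ => conjC (pD1 Ψ (t, x)) * pD1 Φ (t, x)
          + FhatC M c Lstar (fun y => conjC (ψ t y)) x * FhatC M c Lstar (φ t) x
          - ((v : ℂ))^2 * pD2 Φ (t, x) * conjC (pD2 Ψ (t, x)) := by
    funext x
    have e1 : deriv (fun s => conjC (ψ s x)) t = conjC (pD1 Ψ (t, x)) :=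
      (hasDerivAt_conj (pd1 hψ t x)).deriv
    have e2 : deriv (fun s => φ s x) t = pD1 Φ (t, x) := (pd1 hφ t x).deriv
    have e3 : deriv (fun y => φ t y) x = pD2 Φ (t, x) := (pd2 hφ t x).deriv
    have e4 : deriv (fun y => conjC (ψ t y)) x = conjC (pD2 Ψ (t, x)) :=
      (hasDerivAt_conj (pd2 hψ t x)).deriv
    rw [e1, e2, e3, e4]
  rw [hrw1, hrw2]
  congr 1
  refine integral_eq_integral_of_hasDerivAt
    (G := fun x : ℝ => (v : ℂ) * (φ t x * conjC (pD1 Ψ (t, x)))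
      + (v : ℂ) ^ 2 * (φ t x * conjC (pD2 Ψ (t, x)))
      - ∑ i ∈ Finset.range M, ((c (i + 1) * Lstar ^ (2 * i) : ℝ) : ℂ) *
          ∑ k ∈ Finset.range (2 * i + 1), (-1 : ℂ) ^ k * iteratedDeriv k (φ t) x *
            iteratedDeriv (2 * i - k) (FhatC M c Lstar (fun y => conjC (ψ t y))) x)
    ?_ ?_ ?_ ?_
  -- continuity of the rewritten left integrand
  case _ =>
    have hconjc : ∀ {u : ℝ → ℂ}, Continuous u → Continuous fun x => conjC (u x) := by
      intro u hu
      exact Complex.continuous_conj.comp hu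
    have hc1 : Continuous fun x : ℝ => pD1 Ψ (t, x) :=
      (cdD1 hψ).continuous.comp (continuous_const.prodMk continuous_id)
    have hc2 : Continuous fun x : ℝ => pD1 Φ (t, x) :=
      (cdD1 hφ).continuous.comp (continuous_const.prodMk continuous_id)
    have hc3 : Continuous fun x : ℝ => pD2 Φ (t, x) :=
      (cdD2 hφ).continuous.comp (continuous_const.prodMk continuous_id)
    have hc4 : Continuous fun x : ℝ => pD1 (pD1 Ψ) (t, x) :=
      (cdD1 (cdD1 hψ)).continuous.comp (continuous_const.prodMk continuous_id)
    have hc5 : Continuous fun x : ℝ => pD2 (pD1 Ψ) (t, x) :=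
      (cdD2 (cdD1 hψ)).continuous.comp (continuous_const.prodMk continuous_id)
    exact ((hconjc hc1).mul (hc2.add (continuous_const.mul hc3))).sub
      (hφt.continuous.mul ((hconjc hc4).add (continuous_const.mul (hconjc hc5))))
  -- continuity of the rewritten right integrand
  case _ =>
    have hconjc : ∀ {u : ℝ → ℂ}, Continuous u → Continuous fun x => conjC (u x) := by
      intro u hu
      exact Complex.continuous_conj.comp hu
    have hc1 : Continuous fun x : ℝ => pD1 Ψ (t, x) :=
      (cdD1 hψ).continuous.comp (continuous_const.prodMk continuous_id)
    have hc2 : Continuous fun x : ℝ => pD1 Φ (t, x) :=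
      (cdD1 hφ).continuous.comp (continuous_const.prodMk continuous_id)
    have hc3 : Continuous fun x : ℝ => pD2 Φ (t, x) :=
      (cdD2 hφ).continuous.comp (continuous_const.prodMk continuous_id)
    have hc6 : Continuous fun x : ℝ => pD2 Ψ (t, x) :=
      (cdD2 hψ).continuous.comp (continuous_const.prodMk continuous_id)
    exact (((hconjc hc1).mul hc2).add (hW.continuous.mul hFφ.continuous)).sub
      ((continuous_const.mul hc3).mul (hconjc hc6))
  -- the derivative identity
  case _ =>
    intro x hx
    rw [Set.uIcc_of_le hL.le, Set.mem_Icc] at hx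
    obtain ⟨hx0, hxL⟩ := hx
    have hP1 : HasDerivAt (fun y => φ t y * conjC (pD1 Ψ (t, y)))
        (pD2 Φ (t, x) * conjC (pD1 Ψ (t, x)) + φ t x * conjC (pD2 (pD1 Ψ) (t, x))) x :=
      (pd2 hφ t x).mul (hasDerivAt_conj (pd2 (cdD1 hψ) t x))
    have hP2 : HasDerivAt (fun y => φ t y * conjC (pD2 Ψ (t, y)))
        (pD2 Φ (t, x) * conjC (pD2 Ψ (t, x)) + φ t x * conjC (pD2 (pD2 Ψ) (t, x))) x :=
      (pd2 hφ t x).mul (hasDerivAt_conj (pd2 (cdD2 hψ) t x))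
    have hP3 : HasDerivAt (fun y => ∑ i ∈ Finset.range M,
          ((c (i + 1) * Lstar ^ (2 * i) : ℝ) : ℂ) *
          ∑ k ∈ Finset.range (2 * i + 1), (-1 : ℂ) ^ k * iteratedDeriv k (φ t) y *
            iteratedDeriv (2 * i - k) (FhatC M c Lstar (fun y' => conjC (ψ t y'))) y)
        (∑ i ∈ Finset.range M, ((c (i + 1) * Lstar ^ (2 * i) : ℝ) : ℂ) *
          ((-1 : ℂ) ^ (2 * i) * iteratedDeriv (2 * i + 1) (φ t) x *
              FhatC M c Lstar (fun y' => conjC (ψ t y')) x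
            + φ t x * iteratedDeriv (2 * i + 1)
                (FhatC M c Lstar (fun y' => conjC (ψ t y'))) x)) x :=
      HasDerivAt.fun_sum fun i _ => ((telescope_hasDerivAt hφt hW (2 * i) x).const_mul _)
    have hGd := ((hP1.const_mul ((v : ℂ))).add (hP2.const_mul ((v : ℂ) ^ 2))).sub hP3
    refine hGd.congr_deriv ?_
    -- now prove the value identity
    have hsum : (∑ i ∈ Finset.range M, ((c (i + 1) * Lstar ^ (2 * i) : ℝ) : ℂ) *
          ((-1 : ℂ) ^ (2 * i) * iteratedDeriv (2 * i + 1) (φ t) x *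
              FhatC M c Lstar (fun y' => conjC (ψ t y')) x
            + φ t x * iteratedDeriv (2 * i + 1)
                (FhatC M c Lstar (fun y' => conjC (ψ t y'))) x))
        = FhatC M c Lstar (φ t) x * FhatC M c Lstar (fun y' => conjC (ψ t y')) x
          + φ t x * FhatC M c Lstar (FhatC M c Lstar (fun y' => conjC (ψ t y'))) x := by
      have hterm : ∀ i ∈ Finset.range M, ((c (i + 1) * Lstar ^ (2 * i) : ℝ) : ℂ) *
          ((-1 : ℂ) ^ (2 * i) * iteratedDeriv (2 * i + 1) (φ t) x *
              FhatC M c Lstar (fun y' => conjC (ψ t y')) x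
            + φ t x * iteratedDeriv (2 * i + 1)
                (FhatC M c Lstar (fun y' => conjC (ψ t y'))) x)
          = (((c (i + 1) * Lstar ^ (2 * i) : ℝ) : ℂ) * iteratedDeriv (2 * i + 1) (φ t) x) *
              FhatC M c Lstar (fun y' => conjC (ψ t y')) x
            + φ t x * (((c (i + 1) * Lstar ^ (2 * i) : ℝ) : ℂ) *
              iteratedDeriv (2 * i + 1) (FhatC M c Lstar (fun y' => conjC (ψ t y'))) x) := by
        intro i _
        have hneg : (-1 : ℂ) ^ (2 * i) = 1 := by rw [pow_mul]; norm_num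
        rw [hneg]; ring
      rw [Finset.sum_congr rfl hterm, Finset.sum_add_distrib, ← Finset.sum_mul,
        ← Finset.mul_sum]
      rfl
    -- the conjugated wave equation
    have hDop : Dop v ψ = fun r y => pD1 Ψ (r, y) + (v : ℂ) * pD2 Ψ (r, y) := by
      funext r y
      unfold Dop
      rw [show deriv (fun s => ψ s y) r = pD1 Ψ (r, y) from (pd1 hψ r y).deriv,
        show deriv (fun y' => ψ r y') y = pD2 Ψ (r, y) from (pd2 hψ r y).deriv]
    have hwB : (pD1 (pD1 Ψ) (t, x) + (v : ℂ) * pD1 (pD2 Ψ) (t, x))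
        + (v : ℂ) * (pD2 (pD1 Ψ) (t, x) + (v : ℂ) * pD2 (pD2 Ψ) (t, x))
        = FhatC M c Lstar (FhatC M c Lstar (ψ t)) x := by
      have h := hψwave t x hx0 hxL
      rw [hDop] at h
      simp only [Dop] at h
      rw [((pd1 (cdD1 hψ) t x).fun_add ((pd1 (cdD2 hψ) t x).const_mul ((v : ℂ)))).deriv,
        ((pd2 (cdD1 hψ) t x).fun_add ((pd2 (cdD2 hψ) t x).const_mul ((v : ℂ)))).deriv] at h
      exact h
    have hcw := congrArg conjC hwB
    simp only [map_add, map_mul, Complex.conj_ofReal] at hcw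
    have hsymm := congrArg conjC (symm2 hψ (t, x))
    have hQW : FhatC M c Lstar (FhatC M c Lstar (fun y' => conjC (ψ t y'))) x
        = conjC (FhatC M c Lstar (FhatC M c Lstar (ψ t)) x) := by
      rw [FhatC_conj hψt M c Lstar,
        FhatC_conj (contDiff_FhatC hψt M c Lstar) M c Lstar]
    rw [hsum, hQW, ← hcw, hsymm]
    ring
  -- boundary values
  case _ =>
    have key0 : ∀ e : ℝ, φ t e = 0 →
        (∀ j : ℕ, 2 * j ≤ 4 * M → iteratedDeriv (2 * j) (φ t) e = 0) →
        (∀ j : ℕ, 2 * j ≤ 4 * M → iteratedDeriv (2 * j) (ψ t) e = 0) →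
        (v : ℂ) * (φ t e * conjC (pD1 Ψ (t, e)))
          + (v : ℂ) ^ 2 * (φ t e * conjC (pD2 Ψ (t, e)))
          - ∑ i ∈ Finset.range M, ((c (i + 1) * Lstar ^ (2 * i) : ℝ) : ℂ) *
              ∑ k ∈ Finset.range (2 * i + 1), (-1 : ℂ) ^ k * iteratedDeriv k (φ t) e *
                iteratedDeriv (2 * i - k) (FhatC M c Lstar (fun y => conjC (ψ t y))) e
          = 0 := by
      intro e he hφe hψe
      have hWe : ∀ n : ℕ, n ≤ 2 * M → Odd n →
          iteratedDeriv n (FhatC M c Lstar (fun y => conjC (ψ t y))) e = 0 := by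
        intro n hn hodd
        rw [iteratedDeriv_FhatC hb M c Lstar n]
        apply Finset.sum_eq_zero
        intro j hj
        rw [Finset.mem_range] at hj
        obtain ⟨r0, hr0⟩ := hodd
        have hr : 2 * j + 1 + n = 2 * (j + r0 + 1) := by omega
        rw [iteratedDeriv_conj hψt, hr]
        simp only [hψe (j + r0 + 1) (by omega), map_zero, mul_zero]
      have hsum0 : ∀ i ∈ Finset.range M, ((c (i + 1) * Lstar ^ (2 * i) : ℝ) : ℂ) *
          ∑ k ∈ Finset.range (2 * i + 1), (-1 : ℂ) ^ k * iteratedDeriv k (φ t) e *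
            iteratedDeriv (2 * i - k) (FhatC M c Lstar (fun y => conjC (ψ t y))) e = 0 := by
        intro i hi
        rw [Finset.mem_range] at hi
        have hin : ∑ k ∈ Finset.range (2 * i + 1), (-1 : ℂ) ^ k * iteratedDeriv k (φ t) e *
            iteratedDeriv (2 * i - k) (FhatC M c Lstar (fun y => conjC (ψ t y))) e = 0 := by
          apply Finset.sum_eq_zero
          intro k hk
          rw [Finset.mem_range] at hk
          rcases Nat.even_or_odd k with hk2 | hk2
          · obtain ⟨r, hr⟩ := hk2
            rw [show k = 2 * r by omega, hφe r (by omega)]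
            ring
          · obtain ⟨r, hr⟩ := hk2
            have hodd : Odd (2 * i - k) := ⟨i - r - 1, by omega⟩
            rw [hWe (2 * i - k) (by omega) hodd]
            ring
        rw [hin, mul_zero]
      rw [he, Finset.sum_eq_zero hsum0]
      simp
    have hφ0 : φ t 0 = 0 := by
      have := (hφbc t 0 (by omega)).1
      simpa using this
    have hφL : φ t L = 0 := by
      have := (hφbc t 0 (by omega)).2
      simpa using this
    have h1 := key0 L hφL (fun j hj => (hφbc t j hj).2) (fun j hj => (hψbc t j hj).2)
    have h2 := key0 0 hφ0 (fun j hj => (hφbc t j hj).1) (fun j hj => (hψbc t j hj).1)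
    exact h1.trans h2.symm
end
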